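/- arXiv:2512.09186 — 3 statements merged into one kernel-verified Lean document; each statement's English description precedes it below -/
import Mathlib

section
/- For all positive integers s and t, the Ramsey number R(s,t) satisfies R(s,t) ≤ C(s+t-2, t-1), i.e., every graph on C(s+t-2, t-1) vertices contains an independent set of size s or a clique of size t. -/
/-!
Erdős–Szekeres induction. Fix a vertex `v`. The remaining vertices split into neighbours and
non-neighbours of `v`, and by Pascal's rule `C(a+b, a) = C(a+b-1, a-1) + C(a+b-1, b-1)` one of the
two parts is large enough for the induction hypothesis with `a` or `b` lowered by one; adding `v`
to the clique (resp. independent set) found there restores the lost vertex. Independent sets are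
cliques of the complement graph, so both parts are handled by one argument applied to `G` and `Gᶜ`.
-/

open Finset

namespace SimpleGraph

variable {V : Type*}

lemma card_filter_adj_add_card_filter_compl_adj (G : SimpleGraph V) [DecidableRel G.Adj]
    [DecidableEq V] {U : Finset V} {v : V} (hv : v ∈ U) :
    #{w ∈ U | G.Adj v w} + #{w ∈ U | Gᶜ.Adj v w} + 1 = #U := by
  have hnonadj : {w ∈ U | ¬G.Adj v w} = insert v {w ∈ U | Gᶜ.Adj v w} := by
    ext w
    by_cases hw : w = v
    · simp [hw, hv]
    · simp [hw, compl_adj, Ne.symm hw]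
  have hv' : v ∉ {w ∈ U | Gᶜ.Adj v w} := by simp
  rw [add_assoc, ← card_insert_of_notMem hv', ← hnonadj, card_filter_add_card_filter_not]

lemma exists_subset_isNClique_succ_or_of_forall_adj (G : SimpleGraph V) [DecidableEq V]
    {v : V} {W : Finset V} (hW : ∀ w ∈ W, G.Adj v w) {a b : ℕ}
    (h : ∃ S ⊆ W, G.IsNClique a S ∨ Gᶜ.IsNClique b S) :
    ∃ S ⊆ insert v W, G.IsNClique (a + 1) S ∨ Gᶜ.IsNClique b S := by
  obtain ⟨S, hSW, hS | hS⟩ := h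
  · exact ⟨insert v S, insert_subset_insert v hSW, .inl (hS.insert fun w hw ↦ hW w (hSW hw))⟩
  · exact ⟨S, hSW.trans (subset_insert v W), .inr hS⟩

theorem exists_subset_isNClique_or_isNClique_compl (G : SimpleGraph V) (a b : ℕ)
    (U : Finset V) (hU : (a + b).choose a ≤ #U) :
    ∃ S ⊆ U, G.IsNClique (a + 1) S ∨ Gᶜ.IsNClique (b + 1) S := by
  classical
  induction hn : a + b using Nat.strong_induction_on generalizing G a b U with
  | _ m ih =>
  obtain ⟨v, hv⟩ : U.Nonempty := card_pos.mp ((Nat.choose_pos (by omega)).trans_le hU)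
  have hsingleton : {v} ⊆ U := singleton_subset_iff.mpr hv
  cases a with
  | zero => exact ⟨{v}, hsingleton, .inl (isNClique_singleton.mpr rfl)⟩
  | succ a =>
  cases b with
  | zero => exact ⟨{v}, hsingleton, .inr (isNClique_singleton.mpr rfl)⟩
  | succ b =>
  obtain ⟨n, rfl⟩ : ∃ n, m = n + 1 := ⟨a + b + 1, by omega⟩
  have hpascal : (a + 1 + (b + 1)).choose (a + 1) = n.choose a + n.choose b := by
    rw [hn, Nat.choose_succ_succ, show n = a + 1 + b by omega, Nat.choose_symm_add]
  have hsplit := G.card_filter_adj_add_card_filter_compl_adj hv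
  have hsub (H : SimpleGraph V) [DecidableRel H.Adj] : insert v {w ∈ U | H.Adj v w} ⊆ U :=
    insert_subset hv (filter_subset _ U)
  by_cases hnbr : n.choose a ≤ #{w ∈ U | G.Adj v w}
  · obtain ⟨S, hSW, hS⟩ := G.exists_subset_isNClique_succ_or_of_forall_adj
      (fun w hw ↦ (mem_filter.mp hw).2)
      (ih n (by omega) G a (b + 1) {w ∈ U | G.Adj v w}
        (by rwa [show a + (b + 1) = n by omega]) (by omega))
    exact ⟨S, hSW.trans (hsub G), hS⟩
  · obtain ⟨S, hSW, hS⟩ := Gᶜ.exists_subset_isNClique_succ_or_of_forall_adj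
      (fun w hw ↦ (mem_filter.mp hw).2)
      (ih n (by omega) Gᶜ b (a + 1) {w ∈ U | Gᶜ.Adj v w}
        (by rw [show b + (a + 1) = n by omega]; omega) (by omega))
    rw [compl_compl] at hS
    exact ⟨S, hSW.trans (hsub Gᶜ), hS.symm⟩

end SimpleGraph

/-- **Erdős–Szekeres bound**: for all positive integers `s, t`, every simple graph on
`C(s+t-2, t-1)` vertices contains an independent set of size `s` or a clique of size `t`. -/
theorem ramsey_erdos_szekeres_bound (s t : ℕ) (hs : 1 ≤ s) (ht : 1 ≤ t)
    (V : Type*) [Fintype V] (G : SimpleGraph V)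
    (hcard : Fintype.card V = Nat.choose (s + t - 2) (t - 1)) :
    (∃ S : Finset V, S.card = s ∧ ∀ u ∈ S, ∀ w ∈ S, u ≠ w → ¬ G.Adj u w) ∨
    (∃ S : Finset V, G.IsNClique t S) := by
  obtain ⟨a, rfl⟩ : ∃ a, s = a + 1 := ⟨s - 1, by omega⟩
  obtain ⟨b, rfl⟩ : ∃ b, t = b + 1 := ⟨t - 1, by omega⟩
  have hU : (b + a).choose b ≤ #(Finset.univ : Finset V) := by
    rw [Finset.card_univ, hcard, show a + 1 + (b + 1) - 2 = b + a by omega, Nat.add_sub_cancel]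
  obtain ⟨S, -, hclique | hindep⟩ := G.exists_subset_isNClique_or_isNClique_compl b a _ hU
  · exact .inr ⟨S, hclique⟩
  · rw [SimpleGraph.isNClique_compl] at hindep
    exact .inl ⟨S, hindep.card_eq, fun u hu w hw huw ↦ hindep.isIndepSet hu hw huw⟩
end

section
/- For all n ≥ 3 and ω ≥ 1, every C4-free graph on at least C(n,2)·(ω-1) + n vertices contains an independent set of size n or a clique of size ω+1. -/
/-!
Let `S` be a maximum independent set and suppose `#S < n`. Every vertex outside `S` has a
neighbour in `S`. The vertices whose only neighbour in `S` is `a` form a clique together with `a`,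
since two non-adjacent ones could replace `a` in `S`. For `a ≠ b` in `S`, the common neighbours of
`a` and `b` form a clique together with `a`, since two non-adjacent ones would span an induced
`C₄` with `a` and `b`. Without an `(ω + 1)`-clique each of these `#S + C(#S, 2)` classes has at most
`ω - 1` vertices, so `|V| ≤ #S + C(#S + 1, 2)(ω - 1) < C(n, 2)(ω - 1) + n`.
-/

open Finset

namespace SimpleGraph

variable {V : Type*} {G : SimpleGraph V}

theorem IsIndepSet.insert {s : Set V} {a : V} (hs : G.IsIndepSet s) (h : ∀ b ∈ s, ¬G.Adj a b) :
    G.IsIndepSet (insert a s) :=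
  (isClique_compl G).1 <| ((isClique_compl G).2 hs).insert fun b hb hab => ⟨hab, h b hb⟩

theorem IsClique.card_le_of_cliqueFree {n : ℕ} {s : Finset V} (hs : G.IsClique (s : Set V))
    (hG : G.CliqueFree (n + 1)) : #s ≤ n := by
  by_contra! h
  obtain ⟨t, hts, ht⟩ := exists_subset_card_eq h
  exact hG t ⟨hs.subset hts, ht⟩

theorem card_le_sub_one_of_isClique_insert [DecidableEq V] {n : ℕ} {a : V} {s : Finset V}
    (hG : G.CliqueFree (n + 1)) (ha : a ∉ s) (hs : G.IsClique (insert a s : Finset V)) :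
    #s ≤ n - 1 := by
  have := hs.card_le_of_cliqueFree hG
  rw [card_insert_of_notMem ha] at this
  omega

theorem nonempty_cycleGraph_four_embedding {a b x y : V} (hab : a ≠ b) (hxy : x ≠ y)
    (nab : ¬G.Adj a b) (nxy : ¬G.Adj x y) (hax : G.Adj a x) (hxb : G.Adj x b)
    (hby : G.Adj b y) (hya : G.Adj y a) : Nonempty (cycleGraph 4 ↪g G) := by
  refine ⟨⟨⟨![a, x, b, y], fun i j hij => ?_⟩, fun {i j} => ?_⟩⟩
  · fin_cases i <;> fin_cases j <;>
      simp_all [G.ne_of_adj hax, G.ne_of_adj hxb, G.ne_of_adj hby, G.ne_of_adj hya]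
  · change G.Adj (![a, x, b, y] i) (![a, x, b, y] j) ↔ _
    rw [cycleGraph_adj']
    fin_cases i <;> fin_cases j <;>
      simp [*, hax.symm, hxb.symm, hby.symm, hya.symm, G.adj_comm b a, G.adj_comm y x] <;> decide

theorem isClique_commonNeighbors (hC4 : ¬Nonempty (cycleGraph 4 ↪g G)) {a b : V} (hab : a ≠ b)
    (nab : ¬G.Adj a b) : G.IsClique (G.commonNeighbors a b) := by
  intro x hx y hy hxy
  rw [mem_commonNeighbors] at hx hy
  by_contra nxy
  exact hC4 (nonempty_cycleGraph_four_embedding hab hxy nab nxy hx.1 hx.2.symm hy.2 hy.1.symm)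

theorem IsMaximumIndepSet.exists_adj_of_notMem [Finite V] [DecidableEq V] {S : Finset V}
    (hS : G.IsMaximumIndepSet S) {v : V} (hv : v ∉ S) : ∃ a ∈ S, G.Adj a v := by
  by_contra! h
  have := hS.maximum (insert v S) <| by
    rw [coe_insert]
    exact hS.isIndepSet.insert fun b hb hvb => h b hb hvb.symm
  rw [card_insert_of_notMem hv] at this
  omega

variable [Fintype V] [DecidableEq V] [DecidableRel G.Adj] {ω : ℕ} {S p : Finset V}

theorem IsNIndepSet.card_commonNeighbors_le (hC4 : ¬Nonempty (cycleGraph 4 ↪g G))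
    (hG : G.CliqueFree (ω + 1)) (hp : G.IsNIndepSet 2 p) :
    #{v | ∀ a ∈ p, G.Adj a v} ≤ ω - 1 := by
  obtain ⟨a, b, hab, rfl⟩ := card_eq_two.1 hp.card_eq
  have nab : ¬G.Adj a b := hp.isIndepSet (by simp) (by simp) hab
  refine card_le_sub_one_of_isClique_insert (a := a) hG (by simp) ?_
  rw [coe_insert]
  refine (isClique_commonNeighbors hC4 hab nab |>.subset fun v hv => ?_).insert fun v hv _ => ?_
  · simpa [mem_commonNeighbors] using hv
  · simp_all

variable (G) in
def privateNeighborFinset (S : Finset V) (a : V) : Finset V :=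
  {v | v ∉ S ∧ G.Adj a v ∧ ∀ b ∈ S, G.Adj b v → b = a}

/-- Exchanging `a` for two non-adjacent private neighbours of `a` would enlarge `S`. -/
theorem IsMaximumIndepSet.isClique_privateNeighborFinset (hS : G.IsMaximumIndepSet S) {a : V}
    (ha : a ∈ S) : G.IsClique (G.privateNeighborFinset S a : Set V) := by
  intro u hu w hw huw
  by_contra nuw
  simp only [privateNeighborFinset, coe_filter, mem_univ, true_and, Set.mem_ofPred_eq] at hu hw
  have hwS : w ∉ S.erase a := fun h => hw.1 (mem_of_mem_erase h)
  have huS : u ∉ insert w (S.erase a) := by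
    simp only [mem_insert, not_or]
    exact ⟨huw, fun h => hu.1 (mem_of_mem_erase h)⟩
  have hindep : G.IsIndepSet (insert u (insert w (S.erase a)) : Finset V) := by
    simp only [coe_insert, coe_erase]
    refine IsIndepSet.insert (IsIndepSet.insert (hS.isIndepSet.mono Set.sdiff_subset)
      fun b hb hwb => ?_) ?_
    · exact hb.2 (hw.2.2 b hb.1 hwb.symm)
    · simp only [Set.mem_insert_iff, Set.mem_sdiff, Set.mem_singleton_iff]
      rintro b (rfl | ⟨hbS, hba⟩) hub
      · exact nuw hub
      · exact hba (hu.2.2 b hbS hub.symm)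
  have := hS.maximum _ hindep
  rw [card_insert_of_notMem huS, card_insert_of_notMem hwS, card_erase_of_mem ha] at this
  have := card_pos.2 ⟨a, ha⟩
  omega

theorem IsMaximumIndepSet.card_privateNeighborFinset_le (hS : G.IsMaximumIndepSet S)
    (hG : G.CliqueFree (ω + 1)) {a : V} (ha : a ∈ S) :
    #(G.privateNeighborFinset S a) ≤ ω - 1 := by
  refine card_le_sub_one_of_isClique_insert (a := a) hG (by simp [privateNeighborFinset]) ?_
  rw [coe_insert]
  refine (hS.isClique_privateNeighborFinset ha).insert fun v hv _ => ?_
  simp only [privateNeighborFinset, coe_filter, mem_univ, true_and, Set.mem_ofPred_eq] at hv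
  exact hv.2.1

theorem IsMaximumIndepSet.card_le_sum (hS : G.IsMaximumIndepSet S) :
    Fintype.card V ≤ #S + ∑ a ∈ S, #(G.privateNeighborFinset S a) +
      ∑ p ∈ S.powersetCard 2, #{v | ∀ a ∈ p, G.Adj a v} := by
  have hcover : (univ : Finset V) ⊆ S ∪ S.biUnion (G.privateNeighborFinset S) ∪
      (S.powersetCard 2).biUnion fun p => {v | ∀ a ∈ p, G.Adj a v} := by
    intro v _
    by_cases hvS : v ∈ S
    · simp [hvS]
    obtain ⟨a, ha, hav⟩ := hS.exists_adj_of_notMem hvS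
    by_cases hpriv : ∀ b ∈ S, G.Adj b v → b = a
    · exact mem_union_left _ <| mem_union_right _ <| mem_biUnion.2
        ⟨a, ha, by simpa [privateNeighborFinset, hvS, hav]⟩
    · push Not at hpriv
      obtain ⟨b, hb, hbv, hba⟩ := hpriv
      refine mem_union_right _ <| mem_biUnion.2 ⟨{a, b}, ?_, by simp [hav, hbv]⟩
      exact mem_powersetCard.2 ⟨insert_subset ha (singleton_subset_iff.2 hb), card_pair hba.symm⟩
  calc Fintype.card V = #(univ : Finset V) := card_univ.symm
    _ ≤ _ := card_le_card hcover
    _ ≤ _ := (card_union_le _ _).trans (add_le_add_left (card_union_le _ _) _)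
    _ ≤ _ := by gcongr <;> exact card_biUnion_le

theorem IsMaximumIndepSet.card_le_of_cliqueFree (hC4 : ¬Nonempty (cycleGraph 4 ↪g G))
    (hG : G.CliqueFree (ω + 1)) (hS : G.IsMaximumIndepSet S) :
    Fintype.card V ≤ #S + (#S + 1).choose 2 * (ω - 1) := by
  calc Fintype.card V ≤ #S + ∑ a ∈ S, #(G.privateNeighborFinset S a) +
        ∑ p ∈ S.powersetCard 2, #{v | ∀ a ∈ p, G.Adj a v} := hS.card_le_sum
    _ ≤ #S + ∑ _a ∈ S, (ω - 1) + ∑ _p ∈ S.powersetCard 2, (ω - 1) := by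
      gcongr with a ha p hp
      · exact hS.card_privateNeighborFinset_le hG ha
      · obtain ⟨hpS, hp⟩ := mem_powersetCard.1 hp
        exact IsNIndepSet.card_commonNeighbors_le hC4 hG ⟨hS.isIndepSet.mono hpS, hp⟩
    _ = #S + (#S + 1).choose 2 * (ω - 1) := by
      simp only [sum_const, card_powersetCard, smul_eq_mul, Nat.choose_succ_succ,
        Nat.choose_one_right]
      ring

end SimpleGraph

theorem c4_free_ramsey_bound_general (n ω : ℕ)
    (V : Type*) [Fintype V] (G : SimpleGraph V)
    (hC4 : ¬ Nonempty (SimpleGraph.cycleGraph 4 ↪g G))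
    (hcard : Nat.choose n 2 * (ω - 1) + n ≤ Fintype.card V) :
    (∃ S : Finset V, S.card = n ∧ ∀ u ∈ S, ∀ w ∈ S, u ≠ w → ¬ G.Adj u w) ∨
    (∃ S : Finset V, G.IsNClique (ω + 1) S) := by
  classical
  refine or_iff_not_imp_right.2 fun hclique => ?_
  have hG : G.CliqueFree (ω + 1) := fun S hS => hclique ⟨S, hS⟩
  obtain ⟨S, hS⟩ := G.maximumIndepSet_exists
  have hnS : n ≤ #S := by
    by_contra! hSn
    have hchoose : (#S + 1).choose 2 * (ω - 1) ≤ n.choose 2 * (ω - 1) :=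
      Nat.mul_le_mul_right _ (Nat.choose_le_choose 2 hSn)
    have := hS.card_le_of_cliqueFree hC4 hG
    omega
  obtain ⟨T, hTS, rfl⟩ := exists_subset_card_eq hnS
  exact ⟨T, rfl, fun u hu w hw huw => hS.isIndepSet (hTS hu) (hTS hw) huw⟩

/-- For all `n ≥ 3` and `ω ≥ 1`, every `C₄`-free graph (no induced 4-cycle) on at least
`C(n,2)·(ω-1) + n` vertices contains an independent set of size `n` or a clique of size `ω+1`. -/
theorem c4_free_ramsey_bound (n ω : ℕ) (hn : 3 ≤ n) (hω : 1 ≤ ω)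
    (V : Type*) [Fintype V] (G : SimpleGraph V)
    (hC4 : ¬ Nonempty (SimpleGraph.cycleGraph 4 ↪g G))
    (hcard : Nat.choose n 2 * (ω - 1) + n ≤ Fintype.card V) :
    (∃ S : Finset V, S.card = n ∧ ∀ u ∈ S, ∀ w ∈ S, u ≠ w → ¬ G.Adj u w) ∨
    (∃ S : Finset V, G.IsNClique (ω + 1) S) :=
  c4_free_ramsey_bound_general n ω V G hC4 hcard
end

section
/- Every P4-free graph G satisfies χ(G) = ω(G). -/
/-!
In a `P₄`-free graph every maximal independent set `I` meets every maximal clique `K`: otherwise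
pick `i ∈ I` with the most neighbours in `K`, a vertex `k' ∈ K` not adjacent to `i`, and a
neighbour `j ∈ I` of `k'`; by the choice of `i` some neighbour `k ∈ K` of `i` is not adjacent to
`j`, and `i - k - k' - j` is an induced `P₄`. Hence removing a maximum independent set lowers the
clique number, and induction on `ω(G)` colours `G` with `ω(G)` colours.
-/

open Finset

namespace SimpleGraph

variable {V : Type*} {G : SimpleGraph V}

theorem nonempty_pathGraph_four_embedding {a b c d : V} (hab : G.Adj a b) (hbc : G.Adj b c)
    (hcd : G.Adj c d) (hac : ¬ G.Adj a c) (hbd : ¬ G.Adj b d) (had : ¬ G.Adj a d) :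
    Nonempty (pathGraph 4 ↪g G) := by
  have hac' : a ≠ c := by rintro rfl; exact had hcd
  have hbd' : b ≠ d := by rintro rfl; exact had hab
  have had' : a ≠ d := by rintro rfl; exact hac hcd.symm
  refine ⟨⟨⟨![a, b, c, d], fun i j hij ↦ ?_⟩, fun {i j} ↦ ?_⟩⟩
  · fin_cases i <;> fin_cases j <;>
      simp_all [hab.ne, hbc.ne, hcd.ne, Ne.symm]
  · change G.Adj (![a, b, c, d] i) (![a, b, c, d] j) ↔ (pathGraph 4).Adj i j
    fin_cases i <;> fin_cases j <;>
      simp [pathGraph_adj, G.adj_comm _ a, G.adj_comm c b, G.adj_comm d, hab, hbc, hcd, hac, hbd,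
        had]

theorem exists_not_adj_of_maximal_isClique {s : Set V} (hs : Maximal G.IsClique s) {v : V}
    (hv : v ∉ s) : ∃ w ∈ s, ¬ G.Adj v w := by
  by_contra! h
  exact hv (hs.2 (hs.1.insert fun w hw _ ↦ h w hw) (Set.subset_insert v s) (Set.mem_insert v s))

theorem exists_adj_of_maximal_isIndepSet {s : Finset V} (hs : Maximal G.IsIndepSet (s : Set V))
    {v : V} (hv : v ∉ s) : ∃ w ∈ s, G.Adj v w := by
  rw [← isMaximalClique_compl] at hs
  obtain ⟨w, hw, hvw⟩ := exists_not_adj_of_maximal_isClique hs hv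
  exact ⟨w, hw, by simpa [compl_adj, (ne_of_mem_of_not_mem hw hv).symm] using hvw⟩

theorem not_disjoint_of_maximal_isIndepSet_of_maximal_isClique [Nonempty V]
    (hP4 : ¬ Nonempty (pathGraph 4 ↪g G)) {I K : Finset V}
    (hI : Maximal G.IsIndepSet (I : Set V)) (hK : Maximal G.IsClique (K : Set V)) :
    ¬ Disjoint I K := by
  classical
  intro hIK
  have hI₀ : I.Nonempty := by
    obtain ⟨v⟩ := ‹Nonempty V›
    by_cases hv : v ∈ I
    · exact ⟨v, hv⟩
    · obtain ⟨w, hw, -⟩ := exists_adj_of_maximal_isIndepSet hI hv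
      exact ⟨w, hw⟩
  obtain ⟨i, hi, hmax⟩ := I.exists_max_image (fun i ↦ #{k ∈ K | G.Adj i k}) hI₀
  obtain ⟨k', hk', hik'⟩ :=
    exists_not_adj_of_maximal_isClique hK (Finset.disjoint_left.1 hIK hi)
  obtain ⟨j, hj, hk'j⟩ := exists_adj_of_maximal_isIndepSet hI (Finset.disjoint_right.1 hIK hk')
  obtain ⟨k, hk, hik, hjk⟩ : ∃ k ∈ K, G.Adj i k ∧ ¬ G.Adj j k := by
    by_contra! h
    have hsub : {k ∈ K | G.Adj i k} ⊂ {k ∈ K | G.Adj j k} :=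
      (ssubset_iff_of_subset fun k hk ↦ by simp_all).2
        ⟨k', by simp [mem_coe.1 hk', hk'j.symm], by simp [hik']⟩
    exact (hmax j hj).not_gt (card_lt_card hsub)
  have hkk' : G.Adj k k' := hK.1 hk hk' (by rintro rfl; exact hik' hik)
  have hij : ¬ G.Adj i j := hI.1 hi hj (by rintro rfl; exact hik' hk'j.symm)
  exact hP4 (nonempty_pathGraph_four_embedding hik hkk' hk'j hik' (mt G.adj_symm hjk) hij)

theorem Colorable.succ_of_isIndepSet {s : Set V} (hs : G.IsIndepSet s) {n : ℕ}
    (h : (G.induce sᶜ).Colorable n) : G.Colorable (n + 1) := by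
  classical
  obtain ⟨C⟩ := h
  refine ⟨.mk (fun v ↦ if hv : v ∈ s then Fin.last n else (C ⟨v, hv⟩).castSucc) ?_⟩
  intro u v huv
  split_ifs with hu hv hv
  · exact absurd huv (hs hu hv huv.ne)
  · exact (Fin.castSucc_lt_last _).ne'
  · exact (Fin.castSucc_lt_last _).ne
  · exact fun h ↦ C.valid (by simpa using huv) (Fin.castSucc_injective _ h)

variable [Finite V]

theorem cliqueNum_pos [Nonempty V] : 0 < G.cliqueNum := by
  obtain ⟨v⟩ := ‹Nonempty V›
  exact (card_singleton v).symm.trans_le (IsClique.card_le_cliqueNum (tc := by simp))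

theorem cliqueNum_induce_compl_lt {s : Finset V}
    (h : ∀ K : Finset V, G.IsMaximumClique K → ¬ Disjoint s K) :
    (G.induce (s : Set V)ᶜ).cliqueNum < G.cliqueNum := by
  obtain ⟨t, ht⟩ := (G.induce (s : Set V)ᶜ).exists_isNClique_cliqueNum
  rw [isNClique_induce_iff] at ht
  refine (G.cliqueNum_induce_le _).lt_of_ne fun heq ↦ h (t.map (.subtype _)) ?_ ?_
  · exact ⟨ht.isClique, fun u hu ↦ ht.card_eq ▸ heq ▸ hu.card_le_cliqueNum⟩
  · exact Finset.disjoint_right.2 fun v hv ↦ by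
      obtain ⟨⟨w, hw⟩, -, rfl⟩ := mem_map.1 hv
      simpa using hw

theorem colorable_of_cliqueNum_le_of_p4Free
    (hP4 : ¬ Nonempty (pathGraph 4 ↪g G)) {n : ℕ} (hn : G.cliqueNum ≤ n) :
    G.Colorable n := by
  induction n generalizing V with
  | zero =>
    rcases isEmpty_or_nonempty V with hV | hV
    · exact .of_isEmpty 0
    · exact absurd hn cliqueNum_pos.not_ge
  | succ n ih =>
    rcases isEmpty_or_nonempty V with hV | hV
    · exact .of_isEmpty _
    obtain ⟨I, hI⟩ := G.maximumIndepSet_exists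
    have hlt := cliqueNum_induce_compl_lt fun K hK ↦
      not_disjoint_of_maximal_isIndepSet_of_maximal_isClique hP4 (hI.isMaximalIndepSet _)
        (hK.isMaximalClique _)
    exact (ih (fun ⟨e⟩ ↦ hP4 ⟨(Embedding.induce _).comp e⟩) (by omega)).succ_of_isIndepSet
      hI.isIndepSet

end SimpleGraph

/-- Every `P₄`-free graph (no induced path on 4 vertices) satisfies `χ(G) = ω(G)`. -/
theorem p4_free_chromatic_eq_clique
    (V : Type*) [Fintype V] (G : SimpleGraph V)
    (hP4 : ¬ Nonempty (SimpleGraph.pathGraph 4 ↪g G)) :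
    G.chromaticNumber = (G.cliqueNum : ℕ∞) :=
  le_antisymm (SimpleGraph.colorable_of_cliqueNum_le_of_p4Free hP4 le_rfl).chromaticNumber_le
    G.cliqueNum_le_chromaticNumber
end
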